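/- arXiv:2107.06939 — 2 statements merged into one kernel-verified Lean document; each statement's English description precedes it below -/
import Mathlib

section
/- For real-valued random variables X₁ and X₂ defined on a common probability space with finite second moments, Var(max(X₁, X₂)) ≤ Var(X₁) + Var(X₂). -/
/-! The variance of `Y` is at most its mean squared deviation from any constant; take the constant
`max m₁ m₂`, where `mᵢ` is the mean of `Xᵢ`. Since `max` is 1-Lipschitz for the sup norm,
`(max X₁ X₂ - max m₁ m₂)² ≤ max ((X₁ - m₁)², (X₂ - m₂)²) ≤ (X₁ - m₁)² + (X₂ - m₂)²` pointwise,
and integrating gives `Var X₁ + Var X₂`. -/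

open MeasureTheory ProbabilityTheory

lemma sq_max_sub_max_le {α : Type*} [Ring α] [LinearOrder α] [IsStrictOrderedRing α]
    (a b c d : α) : (max a b - max c d) ^ 2 ≤ (a - c) ^ 2 + (b - d) ^ 2 := by
  calc (max a b - max c d) ^ 2
      ≤ max |a - c| |b - d| ^ 2 := by
        rw [← sq_abs]
        exact pow_le_pow_left₀ (abs_nonneg _) (abs_max_sub_max_le_max a b c d) 2
    _ = max ((a - c) ^ 2) ((b - d) ^ 2) := by
        rw [← sq_abs (a - c), ← sq_abs (b - d)]
        exact pow_left_monotoneOn.map_max (abs_nonneg _) (abs_nonneg _)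
    _ ≤ (a - c) ^ 2 + (b - d) ^ 2 := max_le_add_of_nonneg (sq_nonneg _) (sq_nonneg _)

lemma variance_le_integral_sub_sq {Ω : Type*} [MeasurableSpace Ω] {μ : Measure Ω}
    [IsProbabilityMeasure μ] {X : Ω → ℝ} (hX : AEStronglyMeasurable X μ) (c : ℝ) :
    variance X μ ≤ ∫ ω, (X ω - c) ^ 2 ∂μ := by
  rw [← variance_sub_const hX c]
  exact variance_le_expectation_sq (by fun_prop)

/-- **Lemma C.2** (variance of a maximum).  For real-valued random variables `X₁`, `X₂` on
a common probability space with finite second moments,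
`Var(max(X₁, X₂)) ≤ Var(X₁) + Var(X₂)`. -/
theorem variance_max_le {Ω : Type*} [MeasurableSpace Ω] (P : Measure Ω)
    [IsProbabilityMeasure P] (X₁ X₂ : Ω → ℝ)
    (h₁ : MemLp X₁ 2 P) (h₂ : MemLp X₂ 2 P) :
    variance (fun ω => max (X₁ ω) (X₂ ω)) P ≤ variance X₁ P + variance X₂ P := by
  set m₁ := ∫ ω, X₁ ω ∂P
  set m₂ := ∫ ω, X₂ ω ∂P
  have hmax : MemLp (fun ω => max (X₁ ω) (X₂ ω)) 2 P := h₁.sup h₂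
  have hsq₁ : Integrable (fun ω => (X₁ ω - m₁) ^ 2) P := (h₁.sub (memLp_const m₁)).integrable_sq
  have hsq₂ : Integrable (fun ω => (X₂ ω - m₂) ^ 2) P := (h₂.sub (memLp_const m₂)).integrable_sq
  calc variance (fun ω => max (X₁ ω) (X₂ ω)) P
      ≤ ∫ ω, (max (X₁ ω) (X₂ ω) - max m₁ m₂) ^ 2 ∂P :=
        variance_le_integral_sub_sq hmax.aestronglyMeasurable _
    _ ≤ ∫ ω, ((X₁ ω - m₁) ^ 2 + (X₂ ω - m₂) ^ 2) ∂P :=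
        integral_mono (hmax.sub (memLp_const _)).integrable_sq (hsq₁.add hsq₂)
          fun ω => sq_max_sub_max_le _ _ _ _
    _ = variance X₁ P + variance X₂ P := by
        rw [integral_add hsq₁ hsq₂, variance_eq_integral h₁.aestronglyMeasurable.aemeasurable,
          variance_eq_integral h₂.aestronglyMeasurable.aemeasurable]
end

section
/- One has m_*(s*)² ≤ n·τ_*(s*). That is, at sparsity s = s*, the squared minimum projected signal margin is bounded above by n times the identifiability margin. -/
open MeasureTheory ProbabilityTheory Real Finset
open scoped NNReal ENNReal

noncomputable section

namespace Paper

/-- The `j`-th column of `X` as a vector in Euclidean space. -/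
def col {n p : ℕ} (X : Matrix (Fin n) (Fin p) ℝ) (j : Fin p) : EuclideanSpace ℝ (Fin n) :=
  WithLp.toLp 2 (fun i => X i j)

/-- Column space of the submatrix `X_S`. -/
def colSpan {n p : ℕ} (X : Matrix (Fin n) (Fin p) ℝ) (S : Finset (Fin p)) :
    Submodule ℝ (EuclideanSpace ℝ (Fin n)) :=
  Submodule.span ℝ (col X '' (S : Set (Fin p)))

/-- Orthogonal projection of `ℝ^n` onto the column space of `X_S`. -/
def proj {n p : ℕ} (X : Matrix (Fin n) (Fin p) ℝ) (S : Finset (Fin p))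
    (v : EuclideanSpace ℝ (Fin n)) : EuclideanSpace ℝ (Fin n) :=
  ((colSpan X S).orthogonalProjectionOnto v : EuclideanSpace ℝ (Fin n))

/-- The marginal projection operator `P_{S₁|S₂} = P_{X_{S₁}} - P_{X_{S₁ ∩ S₂}}`. -/
def margProj {n p : ℕ} (X : Matrix (Fin n) (Fin p) ℝ) (S₁ S₂ : Finset (Fin p))
    (v : EuclideanSpace ℝ (Fin n)) : EuclideanSpace ℝ (Fin n) :=
  proj X S₁ v - proj X (S₁ ∩ S₂) v

/-- The true signal `μ* = X β*`. -/
def mu {n p : ℕ} (X : Matrix (Fin n) (Fin p) ℝ) (β : Fin p → ℝ) :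
    EuclideanSpace ℝ (Fin n) :=
  WithLp.toLp 2 (fun i => ∑ j, X i j * β j)

/-- `A(s)`: size-`s` models containing at least one false variable. -/
def bigA {p : ℕ} (Sstar : Finset (Fin p)) (s : ℕ) : Set (Finset (Fin p)) :=
  {S | S.card = s ∧ (S \ Sstar).Nonempty}

/-- `A*(s)`: size-`s` models with no false variable. -/
def bigAstar {p : ℕ} (Sstar : Finset (Fin p)) (s : ℕ) : Set (Finset (Fin p)) :=
  {S | S ⊆ Sstar ∧ S.card = s}

/-- `Φ` is an optimal feature swap at sparsity `s`. -/
def IsOptSwap {n p : ℕ} (X : Matrix (Fin n) (Fin p) ℝ) (β : Fin p → ℝ)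
    (Sstar : Finset (Fin p)) (s : ℕ) (Φ : Finset (Fin p) → Finset (Fin p)) : Prop :=
  ∀ S ∈ bigA Sstar s, Φ S ∈ bigAstar Sstar s ∧ S ∩ Sstar ⊆ Φ S ∧
    ∀ T ∈ bigAstar Sstar s, S ∩ Sstar ⊆ T →
      ‖proj X T (mu X β)‖ ≤ ‖proj X (Φ S) (mu X β)‖

/-- Projected signal margin `m(S)`. -/
def margin {n p : ℕ} (X : Matrix (Fin n) (Fin p) ℝ) (β : Fin p → ℝ)
    (Φ : Finset (Fin p) → Finset (Fin p)) (S : Finset (Fin p)) : ℝ :=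
  (‖margProj X (Φ S) S (mu X β)‖ - ‖margProj X S (Φ S) (mu X β)‖) /
    Real.sqrt ((Φ S \ S).card)

/-- Minimum projected signal margin `m_*(s)`. -/
def minMargin {n p : ℕ} (X : Matrix (Fin n) (Fin p) ℝ) (β : Fin p → ℝ)
    (Sstar : Finset (Fin p)) (Φ : Finset (Fin p) → Finset (Fin p)) (s : ℕ) : ℝ :=
  sInf (margin X β Φ '' bigA Sstar s)

/-- Residual sum of squares `L_S = yᵀ(I - P_{X_S})y`. -/
def lossL {n p : ℕ} (X : Matrix (Fin n) (Fin p) ℝ) (S : Finset (Fin p))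
    (y : EuclideanSpace ℝ (Fin n)) : ℝ :=
  ‖y - proj X S y‖ ^ 2

/-- `L_* = min_{|S| = s} L_S`. -/
def lossStar {n p : ℕ} (X : Matrix (Fin n) (Fin p) ℝ) (s : ℕ)
    (y : EuclideanSpace ℝ (Fin n)) : ℝ :=
  sInf {l | ∃ S : Finset (Fin p), S.card = s ∧ l = lossL X S y}

/-- The collection `𝕊(s, η)` of near best `s`-subsets, given a realization `y`. -/
def nearBest {n p : ℕ} (X : Matrix (Fin n) (Fin p) ℝ) (β : Fin p → ℝ)
    (Sstar : Finset (Fin p)) (Φ : Finset (Fin p) → Finset (Fin p)) (s : ℕ) (η : ℝ)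
    (y : EuclideanSpace ℝ (Fin n)) : Set (Finset (Fin p)) :=
  {S | S.card = s ∧ lossL X S y ≤ lossStar X s y + η * (minMargin X β Sstar Φ s) ^ 2}

/-- False discovery proportion. -/
def fdp {p : ℕ} (Sstar S : Finset (Fin p)) : ℝ :=
  ((S \ Sstar).card : ℝ) / max (S.card : ℝ) 1

/-- `A(s*)`: size-`s*` models different from `S*` (equivalently, containing at least one
false variable). -/
def bigAtop {p : ℕ} (Sstar : Finset (Fin p)) : Set (Finset (Fin p)) :=
  {S | S.card = Sstar.card ∧ S ≠ Sstar}

/-- The projected signal margin at sparsity `s = s*`, where the optimal feature swap is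
`Φ(S) = S*`. -/
def marginTop {n p : ℕ} (X : Matrix (Fin n) (Fin p) ℝ) (β : Fin p → ℝ)
    (Sstar S : Finset (Fin p)) : ℝ :=
  (‖margProj X Sstar S (mu X β)‖ - ‖margProj X S Sstar (mu X β)‖) /
    Real.sqrt ((Sstar \ S).card)

/-- The identifiability margin `τ_*(s*)` of Guo et al. -/
def tauStar {n p : ℕ} (X : Matrix (Fin n) (Fin p) ℝ) (β : Fin p → ℝ)
    (Sstar : Finset (Fin p)) : ℝ :=
  sInf ((fun S => (‖mu X β‖ ^ 2 - ‖proj X S (mu X β)‖ ^ 2) /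
    ((n : ℝ) * ((Sstar \ S).card : ℝ))) '' bigAtop Sstar)

/-! Since `μ*` lies in the column space of `X_{S*}`, Pythagoras gives
`‖P_{S*|S} μ*‖² - ‖P_{S|S*} μ*‖² = ‖μ*‖² - ‖P_{X_S} μ*‖² ≥ 0`. For `0 ≤ b ≤ a` one has
`(a - b)² ≤ a² - b²`, so `m(S)²` is at most `n` times the ratio whose minimum is `τ_*(s*)`,
and the bound passes to the infima. -/

section Projection

variable {𝕜 E : Type*} [RCLike 𝕜] [NormedAddCommGroup E] [InnerProductSpace 𝕜 E]

theorem norm_starProjection_sub_starProjection_sq {U V : Submodule 𝕜 E}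
    [U.HasOrthogonalProjection] [V.HasOrthogonalProjection] (h : U ≤ V) (x : E) :
    ‖V.starProjection x - U.starProjection x‖ ^ 2
      = ‖V.starProjection x‖ ^ 2 - ‖U.starProjection x‖ ^ 2 := by
  have hUV : U.starProjection (V.starProjection x) = U.starProjection x := by
    rw [U.starProjection_apply, Submodule.orthogonalProjectionOnto_starProjection_of_le h,
      U.starProjection_apply]
  have hpyth := U.norm_sq_eq_add_norm_sq_starProjection (V.starProjection x)
  rw [Submodule.starProjection_orthogonal_val, hUV] at hpyth
  linarith

end Projection

theorem sub_sq_le_sq_sub_sq {a b : ℝ} (hb : 0 ≤ b) (hba : b ≤ a) :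
    (a - b) ^ 2 ≤ a ^ 2 - b ^ 2 := by
  nlinarith

theorem sq_csInf_image_le {α : Type*} {s : Set α} {f g : α → ℝ} (hf : ∀ x ∈ s, 0 ≤ f x)
    (hfg : ∀ x ∈ s, f x ^ 2 ≤ g x) : sInf (f '' s) ^ 2 ≤ sInf (g '' s) := by
  rcases s.eq_empty_or_nonempty with rfl | hs
  · simp
  have hbdd : BddBelow (f '' s) := ⟨0, Set.forall_mem_image.2 hf⟩
  have hInf : 0 ≤ sInf (f '' s) := le_csInf (hs.image f) (Set.forall_mem_image.2 hf)
  refine le_csInf (hs.image g) (Set.forall_mem_image.2 fun x hx => ?_)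
  calc sInf (f '' s) ^ 2 ≤ f x ^ 2 := by
        gcongr
        exact csInf_le hbdd (Set.mem_image_of_mem f hx)
    _ ≤ g x := hfg x hx

section Design

variable {n p : ℕ} (X : Matrix (Fin n) (Fin p) ℝ)

theorem colSpan_mono {S T : Finset (Fin p)} (h : S ⊆ T) : colSpan X S ≤ colSpan X T :=
  Submodule.span_mono (Set.image_mono (by exact_mod_cast h))

theorem proj_eq_self {S : Finset (Fin p)} {v : EuclideanSpace ℝ (Fin n)}
    (hv : v ∈ colSpan X S) : proj X S v = v :=
  Submodule.starProjection_eq_self_iff.2 hv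

theorem norm_proj_le (S : Finset (Fin p)) (v : EuclideanSpace ℝ (Fin n)) :
    ‖proj X S v‖ ≤ ‖v‖ :=
  Submodule.norm_starProjection_apply_le _ v

theorem norm_margProj_sq (S₁ S₂ : Finset (Fin p)) (v : EuclideanSpace ℝ (Fin n)) :
    ‖margProj X S₁ S₂ v‖ ^ 2 = ‖proj X S₁ v‖ ^ 2 - ‖proj X (S₁ ∩ S₂) v‖ ^ 2 :=
  norm_starProjection_sub_starProjection_sq (colSpan_mono X inter_subset_left) v

theorem norm_margProj_sq_sub_norm_margProj_sq {T : Finset (Fin p)}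
    {v : EuclideanSpace ℝ (Fin n)} (hv : v ∈ colSpan X T) (S : Finset (Fin p)) :
    ‖margProj X T S v‖ ^ 2 - ‖margProj X S T v‖ ^ 2 = ‖v‖ ^ 2 - ‖proj X S v‖ ^ 2 := by
  rw [norm_margProj_sq, norm_margProj_sq, proj_eq_self X hv, inter_comm S T]
  ring

theorem mu_mem_colSpan (β : Fin p → ℝ) {S : Finset (Fin p)} (hS : ∀ j, β j ≠ 0 → j ∈ S) :
    mu X β ∈ colSpan X S := by
  have hmu : mu X β = ∑ j ∈ S, β j • col X j := by
    rw [Finset.sum_subset (subset_univ S) fun j _ hj => by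
      rw [not_imp_comm.1 (hS j) hj, zero_smul]]
    ext i
    simp [mu, col, mul_comm]
  rw [hmu]
  exact Submodule.sum_mem _ fun j hj =>
    Submodule.smul_mem _ _ (Submodule.subset_span (Set.mem_image_of_mem _ hj))

variable (β : Fin p → ℝ) {Sstar : Finset (Fin p)} (hμ : mu X β ∈ colSpan X Sstar)
include hμ

theorem norm_margProj_le (S : Finset (Fin p)) :
    ‖margProj X S Sstar (mu X β)‖ ≤ ‖margProj X Sstar S (mu X β)‖ := by
  have hdiff := norm_margProj_sq_sub_norm_margProj_sq X hμ S
  have hproj := pow_le_pow_left₀ (norm_nonneg _) (norm_proj_le X S (mu X β)) 2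
  exact le_of_pow_le_pow_left₀ two_ne_zero (norm_nonneg _) (by linarith)

theorem marginTop_nonneg (S : Finset (Fin p)) : 0 ≤ marginTop X β Sstar S :=
  div_nonneg (sub_nonneg.2 (norm_margProj_le X β hμ S)) (Real.sqrt_nonneg _)

theorem marginTop_sq_le (S : Finset (Fin p)) :
    marginTop X β Sstar S ^ 2
      ≤ (‖mu X β‖ ^ 2 - ‖proj X S (mu X β)‖ ^ 2) / ((Sstar \ S).card : ℝ) := by
  rw [marginTop, div_pow, Real.sq_sqrt (Nat.cast_nonneg _),
    ← norm_margProj_sq_sub_norm_margProj_sq X hμ S]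
  gcongr
  exact sub_sq_le_sq_sub_sq (norm_nonneg _) (norm_margProj_le X β hμ S)

end Design

/-- The squared minimum projected signal margin at `s = s*` is bounded by `n` times the
identifiability margin: `m_*(s*)² ≤ n τ_*(s*)`. -/
theorem minMargin_sq_le_tauStar {n p : ℕ} (X : Matrix (Fin n) (Fin p) ℝ)
    (β : Fin p → ℝ) (Sstar : Finset (Fin p))
    (hsupp : ∀ j, j ∈ Sstar ↔ β j ≠ 0) (hsn : Sstar.card < n) :
    (sInf (marginTop X β Sstar '' bigAtop Sstar)) ^ 2 ≤ (n : ℝ) * tauStar X β Sstar := by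
  have hμ := mu_mem_colSpan X β fun j => (hsupp j).2
  have hn : (n : ℝ) ≠ 0 := Nat.cast_ne_zero.2 (by omega)
  calc sInf (marginTop X β Sstar '' bigAtop Sstar) ^ 2
      ≤ sInf ((fun S => (‖mu X β‖ ^ 2 - ‖proj X S (mu X β)‖ ^ 2) / ((Sstar \ S).card : ℝ))
          '' bigAtop Sstar) :=
        sq_csInf_image_le (fun S _ => marginTop_nonneg X β hμ S)
          (fun S _ => marginTop_sq_le X β hμ S)
    _ = (n : ℝ) * tauStar X β Sstar := by
        rw [tauStar, ← smul_eq_mul, ← Real.sInf_smul_of_nonneg (Nat.cast_nonneg n),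
          ← Set.image_smul, Set.image_image]
        congr! 2 with S
        rw [smul_eq_mul, ← mul_div_assoc, mul_div_mul_left _ _ hn]

end Paper
end
end
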